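/- Let S be a finite set, V a complex inner product space with orthonormal basis (e_s)_{s∈S}, i, j : S → ℤ functions, and q ∈ ℂ with |q| = 1. Define U e_s = (-1)^{i(s)} q^{j(s)} e_s and ψ = Σ_{s∈S} e_s. Let ∂ : V → V be linear with ∂ ∘ ∂ = 0 such that for each s, ∂ e_s lies in the span of { e_{s'} : i(s') = i(s)+1, j(s') = j(s) }. For integers i₀, j₀ let C^{i₀,j₀} = span{ e_s : i(s) = i₀, j(s) = j₀ }, and let H^{i₀,j₀} = ( ker(∂) ∩ C^{i₀,j₀} ) / ∂(C^{i₀-1,j₀}) (a well-defined quotient since ∂(C^{i₀-1,j₀}) ⊆ ker(∂) ∩ C^{i₀,j₀}). Then ⟨ψ, U ψ⟩ = Σ_{j₀ ∈ j(S)} q^{j₀} Σ_{i₀ ∈ ℤ} (-1)^{i₀} dim H^{i₀,j₀}. -/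

import Mathlib

/-!
Orthonormality gives `⟨ψ, U ψ⟩ = ∑ₛ (-1)^{i(s)} q^{j(s)}`, and grouping the states by bidegree
turns this into `∑_{j₀} q^{j₀} ∑_{i₀} (-1)^{i₀} dim C^{i₀,j₀}`. Since `∂` raises `i` and preserves
`j`, each `C^{•,j₀}` is a bounded complex, and the Euler–Poincaré principle replaces `dim C` by
`dim H` in the alternating sum: with `Z = ker ∂ ⊓ C^n` and `B = ∂ C^n`, rank–nullity gives
`dim C^n = dim Zⁿ + dim Bⁿ` while `dim Hⁿ = dim Zⁿ - dim Bⁿ⁻¹`, and the `B` terms telescope.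
-/

open Module Submodule LinearMap

section EulerCharacteristic

variable {R : Type*} [DivisionRing R]

theorem finsum_neg_one_zpow_mul_comp_sub_one (f : ℤ → R) :
    ∑ᶠ n : ℤ, (-1 : R) ^ n * f (n - 1) = -∑ᶠ n : ℤ, (-1 : R) ^ n * f n := by
  have hsign (n : ℤ) : (-1 : R) ^ n = -(-1 : R) ^ (n - 1) := by
    rw [zpow_sub_one₀ (neg_ne_zero.mpr one_ne_zero), inv_neg, inv_one, mul_neg_one, neg_neg]
  calc ∑ᶠ n : ℤ, (-1 : R) ^ n * f (n - 1)
      = ∑ᶠ n : ℤ, -((-1 : R) ^ (n - 1) * f (n - 1)) := finsum_congr fun n => by rw [hsign, neg_mul]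
    _ = -∑ᶠ n : ℤ, (-1 : R) ^ n * f n := by
        rw [finsum_neg_distrib]
        exact congrArg Neg.neg
          (finsum_comp_equiv (Equiv.subRight (1 : ℤ)) (f := fun n => (-1 : R) ^ n * f n))

theorem finsum_neg_one_zpow_mul_eq_of_add_eq {h z b c : ℤ → R}
    (hz : z.HasFiniteSupport) (hb : b.HasFiniteSupport)
    (hh : ∀ n, h n + b (n - 1) = z n) (hc : ∀ n, z n + b n = c n) :
    ∑ᶠ n : ℤ, (-1 : R) ^ n * h n = ∑ᶠ n : ℤ, (-1 : R) ^ n * c n := by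
  have hz' : (fun n => (-1 : R) ^ n * z n).HasFiniteSupport := hz.mul_right _
  have hb' : (fun n => (-1 : R) ^ n * b n).HasFiniteSupport := hb.mul_right _
  have hb₁ : (fun n => (-1 : R) ^ n * b (n - 1)).HasFiniteSupport :=
    (hb.comp_of_injective (sub_left_injective (b := 1))).mul_right _
  calc ∑ᶠ n : ℤ, (-1 : R) ^ n * h n
      = ∑ᶠ n : ℤ, ((-1 : R) ^ n * z n - (-1 : R) ^ n * b (n - 1)) := by
        simp_rw [← mul_sub, ← hh, add_sub_cancel_right]
    _ = ∑ᶠ n : ℤ, (-1 : R) ^ n * z n + ∑ᶠ n : ℤ, (-1 : R) ^ n * b n := by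
        rw [finsum_sub_distrib hz' hb₁, finsum_neg_one_zpow_mul_comp_sub_one, sub_neg_eq_add]
    _ = ∑ᶠ n : ℤ, (-1 : R) ^ n * c n := by
        rw [← finsum_add_distrib hz' hb']
        simp_rw [← mul_add, hc]

end EulerCharacteristic

section Homology

variable {K V W : Type*} [Field K] [AddCommGroup V] [Module K V] [AddCommGroup W] [Module K W]

theorem Submodule.finrank_quotient_comap_subtype_add_finrank {p q : Submodule K V} (hqp : q ≤ p)
    [FiniteDimensional K p] :
    finrank K (p ⧸ q.comap p.subtype) + finrank K q = finrank K p := by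
  rw [← (comapSubtypeEquivOfLe hqp).finrank_eq]
  exact finrank_quotient_add_finrank _

theorem LinearMap.finrank_ker_inf_add_finrank_map (f : V →ₗ[K] W) (p : Submodule K V)
    [FiniteDimensional K p] :
    finrank K ↥(ker f ⊓ p) + finrank K (p.map f) = finrank K p := by
  have hker : ker (f.domRestrict p) = (ker f ⊓ p).comap p.subtype := by
    rw [ker_domRestrict, comap_inf, comap_subtype_self, inf_top_eq]
  rw [← finrank_range_add_finrank_ker (f.domRestrict p), range_domRestrict, hker,
    (comapSubtypeEquivOfLe inf_le_right).finrank_eq, add_comm]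

abbrev gradedHomology (d : V →ₗ[K] V) (C : ℤ → Submodule K V) (n : ℤ) : Type _ :=
  ↥(ker d ⊓ C n) ⧸ (map d (C (n - 1))).comap (ker d ⊓ C n).subtype

theorem finsum_neg_one_zpow_mul_finrank_gradedHomology {R : Type*} [DivisionRing R]
    (d : V →ₗ[K] V) (hdd : d ∘ₗ d = 0) (C : ℤ → Submodule K V)
    [∀ n, FiniteDimensional K (C n)] (hdC : ∀ n, (C n).map d ≤ C (n + 1))
    (hC : {n | C n ≠ ⊥}.Finite) :
    ∑ᶠ n : ℤ, (-1 : R) ^ n * (finrank K (gradedHomology d C n) : R) =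
      ∑ᶠ n : ℤ, (-1 : R) ^ n * (finrank K (C n) : R) := by
  have hsupport {p : ℤ → Submodule K V} (hp : ∀ n, C n = ⊥ → p n = ⊥) :
      (fun n => (finrank K (p n) : R)).HasFiniteSupport :=
    hC.subset fun n hn hCn => hn <| by dsimp only; rw [hp n hCn, finrank_bot, Nat.cast_zero]
  have hboundary (n : ℤ) : (C (n - 1)).map d ≤ ker d ⊓ C n := by
    refine le_inf ((map_le_range).trans (range_le_ker_iff.mpr hdd)) ?_
    simpa using hdC (n - 1)
  refine finsum_neg_one_zpow_mul_eq_of_add_eq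
    (z := fun n => (finrank K ↥(ker d ⊓ C n) : R)) (b := fun n => (finrank K ((C n).map d) : R))
    (hsupport fun n h => by simp [h]) (hsupport fun n h => by simp [h]) (fun n => ?_) (fun n => ?_)
  · have := finiteDimensional_of_le (inf_le_right : ker d ⊓ C n ≤ C n)
    rw [← Nat.cast_add]
    exact congrArg Nat.cast (finrank_quotient_comap_subtype_add_finrank (hboundary n))
  · rw [← Nat.cast_add]
    exact congrArg Nat.cast (d.finrank_ker_inf_add_finrank_map (C n))

end Homology

section Bigrading

open Finset

theorem Orthonormal.inner_sum_apply_sum {𝕜 E ι : Type*} [RCLike 𝕜] [SeminormedAddCommGroup E]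
    [InnerProductSpace 𝕜 E] [Fintype ι] {e : ι → E} (he : Orthonormal 𝕜 e) {U : E →ₗ[𝕜] E}
    {c : ι → 𝕜} (hU : ∀ s, U (e s) = c s • e s) :
    inner 𝕜 (∑ s, e s) (U (∑ s, e s)) = ∑ s, c s := by
  classical
  simp only [map_sum, hU, sum_inner, inner_sum, inner_smul_right, orthonormal_iff_ite.mp he,
    mul_one, sum_ite_eq', mem_univ, if_true]

theorem LinearIndependent.finrank_span_image_finset {K V ι : Type*} [DivisionRing K]
    [AddCommGroup V] [Module K V] {e : ι → V} (he : LinearIndependent K e) (t : Finset ι) :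
    finrank K (span K (e '' t)) = #t := by
  rw [Set.image_eq_range]
  exact (finrank_span_eq_card (he.comp _ Subtype.val_injective)).trans (Fintype.card_coe t)

theorem finsum_mul_card_filter_eq_sum {ι κ R : Type*} [Semiring R] [DecidableEq κ]
    (t : Finset ι) (g : ι → κ) (f : κ → R) :
    ∑ᶠ a, f a * #{x ∈ t | g x = a} = ∑ x ∈ t, f (g x) := by
  rw [sum_comp, finsum_eq_sum_of_support_subset (s := t.image g)]
  · exact sum_congr rfl fun a _ => by rw [nsmul_eq_mul, Nat.cast_comm]
  · intro a ha
    by_contra hat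
    have hempty : #{x ∈ t | g x = a} = 0 :=
      card_eq_zero.mpr (filter_eq_empty_iff.mpr fun x hx hgx => hat (hgx ▸ mem_image_of_mem g hx))
    exact ha (by simp only [hempty, Nat.cast_zero, mul_zero])

theorem sum_neg_one_zpow_mul_zpow_eq_sum_image {S R : Type*} [Fintype S] [Field R]
    (i j : S → ℤ) (q : R) :
    ∑ s, (-1 : R) ^ i s * q ^ j s =
      ∑ j₀ ∈ univ.image j, q ^ j₀ * ∑ᶠ i₀ : ℤ, (-1 : R) ^ i₀ * #{s | i s = i₀ ∧ j s = j₀} := by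
  classical
  rw [← sum_fiberwise_of_maps_to fun s _ => mem_image_of_mem j (mem_univ s)]
  refine sum_congr rfl fun j₀ _ => ?_
  have hfiber (i₀ : ℤ) : #{s | i s = i₀ ∧ j s = j₀} = #{s ∈ {s | j s = j₀} | i s = i₀} := by
    rw [filter_filter]; simp only [and_comm]
  simp only [hfiber, finsum_mul_card_filter_eq_sum, mul_sum]
  refine sum_congr rfl fun s hs => ?_
  rw [(mem_filter.mp hs).2, mul_comm]

end Bigrading

theorem stmt_8_general {V : Type*} [NormedAddCommGroup V] [InnerProductSpace ℂ V]
    {S : Type*} [Fintype S] (e : S → V) (he : Orthonormal ℂ e)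
    (i j : S → ℤ) (q : ℂ)
    (U : V →ₗ[ℂ] V)
    (hU : ∀ s : S, U (e s) = ((-1 : ℂ) ^ (i s) * q ^ (j s)) • e s)
    (ψ : V) (hψ : ψ = ∑ s : S, e s)
    (d : V →ₗ[ℂ] V) (hdd : d ∘ₗ d = 0)
    (C : ℤ → ℤ → Submodule ℂ V)
    (hC : ∀ i₀ j₀ : ℤ, C i₀ j₀ =
      Submodule.span ℂ (e '' {s : S | i s = i₀ ∧ j s = j₀}))
    (hd : ∀ s : S, d (e s) ∈ C (i s + 1) (j s)) :
    (inner ℂ ψ (U ψ) : ℂ) =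
      ∑ j₀ ∈ Finset.image j Finset.univ, q ^ j₀ *
        ∑ᶠ i₀ : ℤ, (-1 : ℂ) ^ i₀ *
          (Module.finrank ℂ
            (↥(LinearMap.ker d ⊓ C i₀ j₀) ⧸
              Submodule.comap (LinearMap.ker d ⊓ C i₀ j₀).subtype
                (Submodule.map d (C (i₀ - 1) j₀))) : ℂ) := by
  classical
  have hdim (i₀ j₀ : ℤ) :
      finrank ℂ (C i₀ j₀) = (Finset.univ.filter fun s => i s = i₀ ∧ j s = j₀).card := by
    rw [hC, ← Finset.coe_filter_univ]
    exact he.linearIndependent.finrank_span_image_finset _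
  have hfin (i₀ j₀ : ℤ) : FiniteDimensional ℂ (C i₀ j₀) := by
    rw [hC]; exact FiniteDimensional.span_of_finite ℂ ((Set.toFinite _).image e)
  have hdC (i₀ j₀ : ℤ) : (C i₀ j₀).map d ≤ C (i₀ + 1) j₀ := by
    rw [hC i₀ j₀, Submodule.map_span, span_le]
    rintro _ ⟨_, ⟨s, ⟨rfl, rfl⟩, rfl⟩, rfl⟩
    exact hd s
  have hsupp (j₀ : ℤ) : {i₀ | C i₀ j₀ ≠ ⊥}.Finite := by
    refine (Set.finite_range i).subset fun i₀ hne => by_contra fun hi => hne ?_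
    rw [hC, span_eq_bot]
    rintro _ ⟨s, ⟨rfl, -⟩, rfl⟩
    exact absurd ⟨s, rfl⟩ hi
  rw [hψ, he.inner_sum_apply_sum hU, sum_neg_one_zpow_mul_zpow_eq_sum_image]
  refine Finset.sum_congr rfl fun j₀ _ => ?_
  rw [finsum_neg_one_zpow_mul_finrank_gradedHomology d hdd (C · j₀) (hdC · j₀) (hsupp j₀)]
  simp only [hdim]

/-- The bracket amplitude as a graded Euler characteristic of Khovanov homology:
`⟨ψ, U ψ⟩ = ∑_{j₀} q^{j₀} ∑_{i₀} (-1)^{i₀} dim H^{i₀,j₀}`, where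
`C^{i₀,j₀}` is the span of the enhanced states of bigrading `(i₀, j₀)` and
`H^{i₀,j₀} = (ker d ∩ C^{i₀,j₀}) ⧸ d(C^{i₀-1,j₀})`. -/
theorem stmt_8 {V : Type*} [NormedAddCommGroup V] [InnerProductSpace ℂ V]
    {S : Type*} [Fintype S] (e : S → V) (he : Orthonormal ℂ e)
    (i j : S → ℤ) (q : ℂ) (hq : ‖q‖ = 1)
    (U : V →ₗ[ℂ] V)
    (hU : ∀ s : S, U (e s) = ((-1 : ℂ) ^ (i s) * q ^ (j s)) • e s)
    (ψ : V) (hψ : ψ = ∑ s : S, e s)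
    (d : V →ₗ[ℂ] V) (hdd : d ∘ₗ d = 0)
    (C : ℤ → ℤ → Submodule ℂ V)
    (hC : ∀ i₀ j₀ : ℤ, C i₀ j₀ =
      Submodule.span ℂ (e '' {s : S | i s = i₀ ∧ j s = j₀}))
    (hd : ∀ s : S, d (e s) ∈ C (i s + 1) (j s)) :
    (inner ℂ ψ (U ψ) : ℂ) =
      ∑ j₀ ∈ Finset.image j Finset.univ, q ^ j₀ *
        ∑ᶠ i₀ : ℤ, (-1 : ℂ) ^ i₀ *
          (Module.finrank ℂ
            (↥(LinearMap.ker d ⊓ C i₀ j₀) ⧸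
              Submodule.comap (LinearMap.ker d ⊓ C i₀ j₀).subtype
                (Submodule.map d (C (i₀ - 1) j₀))) : ℂ) :=
  stmt_8_general e he i j q U hU ψ hψ d hdd C hC hd
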